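/- Let n ≥ 1 and let u₀, u₁, z ∈ ℝⁿ be such that 0 ∈ conv_c([u₀, u₁]), where [u₀, u₁] denotes the line segment from u₀ to u₁. Then the two skewed 1-lenses conv_c([u₁ + z, u₀ − z]) and conv_c([−u₁ + z, −u₀ − z]) have nonempty intersection. -/

import Mathlib

open Metric Set

noncomputable section

/-- The `c`-dual of a set `A ⊆ ℝⁿ`. -/
def cDual {n : ℕ} (A : Set (EuclideanSpace ℝ (Fin n))) : Set (EuclideanSpace ℝ (Fin n)) :=
  {y | ∀ x ∈ A, ‖x - y‖ ≤ 1}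

/-- The `c`-hull of a set: `conv_c(A) = (A^c)^c`. -/
def cHull {n : ℕ} (A : Set (EuclideanSpace ℝ (Fin n))) : Set (EuclideanSpace ℝ (Fin n)) :=
  cDual (cDual A)

/-!
Write the two segments as `[m - d₁, m + d₁]` and `[-m - d₂, -m + d₂]`. For the lens
`L(d) = conv_c [-d, d]` and its dual `D(d) = [-d, d]^c`, every unit vector `f` splits as
`f = k + w` with `k ∈ L(d)` and `w ∈ D(d)`: the support functions of `L(d)` and `D(d)` add up to
`1`. If the two lenses were disjoint, a unit vector `f` would strictly separate them; splitting
`f = kᵢ + wᵢ` for `d₁` and `d₂`, the points `m + k₁` and `-m - k₂` of the two lenses differ by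
`-2 w - 2 f`, where `w = m - (w₁ + w₂) / 2` lies in `[u₀, u₁]^c` and hence, as
`0 ∈ conv_c [u₀, u₁]`, in the unit ball. So `⟪f, (-m - k₂) - (m + k₁)⟫ ≤ 0`, contradicting the
separation.
-/

open scoped RealInnerProductSpace

lemma exists_norm_eq_one_inner_lt_of_disjoint {F : Type*} [NormedAddCommGroup F]
    [InnerProductSpace ℝ F] [CompleteSpace F] {s t : Set F} (hs : Convex ℝ s) (hsc : IsCompact s)
    (ht : Convex ℝ t) (htc : IsClosed t) (hst : Disjoint s t) (hs₀ : s.Nonempty)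
    (ht₀ : t.Nonempty) : ∃ f : F, ‖f‖ = 1 ∧ ∀ p ∈ s, ∀ q ∈ t, ⟪f, p⟫ < ⟪f, q⟫ := by
  obtain ⟨φ, u, v, hu, huv, hv⟩ := geometric_hahn_banach_compact_closed hs hsc ht htc hst
  set y := (InnerProductSpace.toDual ℝ F).symm φ
  have hy : ∀ p ∈ s, ∀ q ∈ t, ⟪y, p⟫ < ⟪y, q⟫ := fun p hp q hq => by
    simp only [y, InnerProductSpace.toDual_symm_apply]
    linarith [hu p hp, hv q hq]
  obtain ⟨p, hp⟩ := hs₀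
  obtain ⟨q, hq⟩ := ht₀
  have hy₀ : y ≠ 0 := fun h => by simpa [h] using hy p hp q hq
  refine ⟨‖y‖⁻¹ • y, by simp [norm_smul, hy₀], fun p hp q hq => ?_⟩
  simp only [real_inner_smul_left]
  exact mul_lt_mul_of_pos_left (hy p hp q hq) (by positivity)

section

variable {n : ℕ}

local notation "𝔼" => EuclideanSpace ℝ (Fin n)

@[simp]
lemma cDual_empty : cDual (∅ : Set 𝔼) = univ := by
  simp [cDual]

lemma subset_cHull (A : Set 𝔼) : A ⊆ cHull A :=
  fun x hx _ hy => norm_sub_rev x _ ▸ hy x hx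

lemma cDual_eq_biInter (A : Set 𝔼) : cDual A = ⋂ x ∈ A, closedBall x 1 := by
  ext y
  simp [cDual, dist_eq_norm']

lemma convex_cDual (A : Set 𝔼) : Convex ℝ (cDual A) := by
  rw [cDual_eq_biInter]
  exact convex_iInter₂ fun x _ => convex_closedBall x 1

lemma isClosed_cDual (A : Set 𝔼) : IsClosed (cDual A) := by
  rw [cDual_eq_biInter]
  exact isClosed_biInter fun x _ => isClosed_closedBall

lemma isCompact_cDual {A : Set 𝔼} (hA : A.Nonempty) : IsCompact (cDual A) := by
  obtain ⟨x, hx⟩ := hA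
  have hball : cDual A ⊆ closedBall x 1 := by
    rw [cDual_eq_biInter]
    exact biInter_subset_of_mem hx
  exact isCompact_of_isClosed_isBounded (isClosed_cDual A) (isBounded_closedBall.subset hball)

lemma mem_cDual_segment_iff {a b y : 𝔼} :
    y ∈ cDual (segment ℝ a b) ↔ ‖a - y‖ ≤ 1 ∧ ‖b - y‖ ≤ 1 := by
  refine ⟨fun h => ⟨h a (left_mem_segment ℝ a b), h b (right_mem_segment ℝ a b)⟩, fun h => ?_⟩
  have : segment ℝ a b ⊆ closedBall y 1 :=
    (convex_closedBall y 1).segment_subset (by simpa [dist_eq_norm] using h.1)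
      (by simpa [dist_eq_norm] using h.2)
  exact fun x hx => by simpa [dist_eq_norm] using this hx

lemma norm_le_one_of_mem_cDual_segment {p d y : 𝔼} (hy : y ∈ cDual (segment ℝ (p - d) (p + d))) :
    ‖d‖ ≤ 1 := by
  rw [mem_cDual_segment_iff] at hy
  have h2d : (2 : ℝ) • d = (p + d - y) - (p - d - y) := by module
  have := norm_sub_le (p + d - y) (p - d - y)
  rw [← h2d, norm_smul, Real.norm_two] at this
  linarith

lemma add_mem_cHull_segment {d k : 𝔼} (hk : k ∈ cHull (segment ℝ (-d) d)) (p : 𝔼) :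
    p + k ∈ cHull (segment ℝ (p - d) (p + d)) := by
  intro y hy
  rw [mem_cDual_segment_iff] at hy
  have hy' : y - p ∈ cDual (segment ℝ (-d) d) := mem_cDual_segment_iff.2
    ⟨by rw [show -d - (y - p) = p - d - y by abel]; exact hy.1,
      by rw [show d - (y - p) = p + d - y by abel]; exact hy.2⟩
  rw [show y - (p + k) = y - p - k by abel]
  exact hk _ hy'

lemma sub_mem_cHull_segment {d k : 𝔼} (hk : k ∈ cHull (segment ℝ (-d) d)) (p : 𝔼) :
    p - k ∈ cHull (segment ℝ (p - d) (p + d)) := by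
  intro y hy
  rw [mem_cDual_segment_iff] at hy
  have hy' : p - y ∈ cDual (segment ℝ (-d) d) := mem_cDual_segment_iff.2
    ⟨by rw [show -d - (p - y) = -(p + d - y) by abel, norm_neg]; exact hy.2,
      by rw [show d - (p - y) = -(p - d - y) by abel, norm_neg]; exact hy.1⟩
  rw [show y - (p - k) = -(p - y - k) by abel, norm_neg]
  exact hk _ hy'

lemma sub_mem_cDual_segment {d w : 𝔼} (hw : w ∈ cDual (segment ℝ (-d) d)) (p : 𝔼) :
    p - w ∈ cDual (segment ℝ (p - d) (p + d)) := by
  rw [mem_cDual_segment_iff] at hw ⊢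
  rw [show p - d - (p - w) = -(d - w) by abel, show p + d - (p - w) = -(-d - w) by abel,
    norm_neg, norm_neg]
  exact hw.symm

lemma convex_combination_mem_cDual_segment {d₁ d₂ w₁ w₂ : 𝔼}
    (h₁ : w₁ ∈ cDual (segment ℝ (-d₁) d₁)) (h₂ : w₂ ∈ cDual (segment ℝ (-d₂) d₂)) {a b : ℝ}
    (ha : 0 ≤ a) (hb : 0 ≤ b) (hab : a + b = 1) :
    a • w₁ + b • w₂ ∈ cDual (segment ℝ (-(a • d₁ + b • d₂)) (a • d₁ + b • d₂)) := by
  rw [mem_cDual_segment_iff] at h₁ h₂ ⊢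
  have hcomb : ∀ x₁ x₂ : 𝔼, ‖x₁‖ ≤ 1 → ‖x₂‖ ≤ 1 → ‖a • x₁ + b • x₂‖ ≤ 1 := fun x₁ x₂ hx₁ hx₂ =>
    calc ‖a • x₁ + b • x₂‖ ≤ a * ‖x₁‖ + b * ‖x₂‖ := by
          simpa [norm_smul, abs_of_nonneg ha, abs_of_nonneg hb] using norm_add_le (a • x₁) (b • x₂)
      _ ≤ a * 1 + b * 1 := by gcongr
      _ = 1 := by rw [mul_one, mul_one, hab]
  constructor
  · rw [show -(a • d₁ + b • d₂) - (a • w₁ + b • w₂) = a • (-d₁ - w₁) + b • (-d₂ - w₂) by module]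
    exact hcomb _ _ h₁.1 h₂.1
  · rw [show a • d₁ + b • d₂ - (a • w₁ + b • w₂) = a • (d₁ - w₁) + b • (d₂ - w₂) by module]
    exact hcomb _ _ h₁.2 h₂.2

lemma mem_cDual_segment_neg_iff {d x : 𝔼} :
    x ∈ cDual (segment ℝ (-d) d) ↔ ‖d‖ ^ 2 + ‖x‖ ^ 2 + 2 * |⟪d, x⟫| ≤ 1 := by
  rw [mem_cDual_segment_iff, ← sq_le_one_iff₀ (norm_nonneg _), ← sq_le_one_iff₀ (norm_nonneg _),
    show -d - x = -(d + x) by abel, norm_neg, norm_add_sq_real, norm_sub_sq_real]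
  constructor
  · rintro ⟨h₁, h₂⟩
    cases abs_cases ⟪d, x⟫ <;> linarith
  · intro h
    constructor <;> linarith [le_abs_self ⟪d, x⟫, neg_abs_le ⟪d, x⟫]

lemma exists_mem_cDual_sub_mem_cHull_of_sq_le_inner {f d : 𝔼} (hf : ‖f‖ = 1)
    (hfd : ‖d‖ ^ 2 ≤ ⟪f, d⟫) :
    ∃ w ∈ cDual (segment ℝ (-d) d), f - w ∈ cHull (segment ℝ (-d) d) := by
  refine ⟨f - d, mem_cDual_segment_iff.2 ⟨?_, ?_⟩, ?_⟩
  · rw [show -d - (f - d) = -f by abel, norm_neg, hf]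
  · rw [← sq_le_one_iff₀ (norm_nonneg _), ← real_inner_self_eq_norm_sq]
    simp only [inner_sub_left, inner_sub_right, real_inner_comm f d]
    simp only [real_inner_self_eq_norm_sq, hf]
    linarith
  · rw [sub_sub_cancel]
    exact subset_cHull _ (right_mem_segment ℝ _ _)

lemma exists_mem_cDual_sub_mem_cHull_of_inner_eq_zero {a : ℝ} {d e : 𝔼} (ha : |a| ≤ 1)
    (hd : ‖d‖ ≤ 1) (hde : ⟪d, e⟫ = 0) (hf : ‖a • d + e‖ = 1) :
    ∃ w ∈ cDual (segment ℝ (-d) d), a • d + e - w ∈ cHull (segment ℝ (-d) d) := by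
  have hed : ⟪e, d⟫ = 0 := by rw [real_inner_comm, hde]
  have hunit : a ^ 2 * ‖d‖ ^ 2 + ‖e‖ ^ 2 = 1 := by
    have h := norm_add_sq_real (a • d) e
    rw [hf, real_inner_smul_left, hde, norm_smul, mul_pow, Real.norm_eq_abs, sq_abs] at h
    linarith
  have hD : ‖d‖ ^ 2 ≤ 1 := by nlinarith [norm_nonneg d]
  have hts : 1 - ‖d‖ ^ 2 ≤ ‖e‖ ^ 2 := by
    nlinarith [(sq_le_one_iff_abs_le_one a).2 ha, sq_nonneg ‖d‖]
  -- `μ • e` is the point in direction `e` of the rim `{w ⊥ d | ‖w‖² = 1 - ‖d‖²}` of the dual lens;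
  -- if `e = 0` then `‖d‖ = 1`, and the junk value `μ = 0` still satisfies `hμ`.
  set μ := √((1 - ‖d‖ ^ 2) / ‖e‖ ^ 2)
  have hμ1 : μ ≤ 1 := Real.sqrt_le_one.2 (div_le_one_of_le₀ hts (sq_nonneg _))
  have hμ : μ ^ 2 * ‖e‖ ^ 2 = 1 - ‖d‖ ^ 2 := by
    rcases eq_or_ne (‖e‖ ^ 2) 0 with he | he
    · rw [he]; linarith
    · rw [Real.sq_sqrt (div_nonneg (by linarith) (sq_nonneg _)), div_mul_cancel₀ _ he]
  have hw : μ • e ∈ cDual (segment ℝ (-d) d) := by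
    rw [mem_cDual_segment_neg_iff, real_inner_smul_right, hde, norm_smul, mul_pow,
      Real.norm_eq_abs, sq_abs, hμ]
    simp
  refine ⟨μ • e, hw, fun x hx => ?_⟩
  have hP := mem_cDual_segment_neg_iff.1 hx
  have hQ : -(μ * ‖e‖ ^ 2) ≤ ⟪e, x⟫ := by
    refine neg_le_of_abs_le (abs_le_of_sq_le_sq ?_ (by positivity))
    have hcs := real_inner_mul_inner_self_le e x
    rw [real_inner_self_eq_norm_sq, real_inner_self_eq_norm_sq] at hcs
    have : ‖x‖ ^ 2 ≤ μ ^ 2 * ‖e‖ ^ 2 := by linarith [abs_nonneg ⟪d, x⟫]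
    nlinarith [sq_nonneg ‖e‖]
  have haP : -(a * ⟪d, x⟫) ≤ |⟪d, x⟫| :=
    calc -(a * ⟪d, x⟫) ≤ |a| * |⟪d, x⟫| := abs_mul a ⟪d, x⟫ ▸ neg_le_abs _
      _ ≤ |⟪d, x⟫| := mul_le_of_le_one_left (abs_nonneg _) ha
  rw [← sq_le_one_iff₀ (norm_nonneg _), ← real_inner_self_eq_norm_sq]
  simp only [inner_sub_left, inner_sub_right, inner_add_left, inner_add_right,
    real_inner_smul_left, real_inner_smul_right, hde, hed, real_inner_comm d x, real_inner_comm e x]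
  simp only [real_inner_self_eq_norm_sq]
  nlinarith [mul_nonneg (sub_nonneg.2 hμ1) (neg_le_iff_add_nonneg.1 hQ)]

lemma exists_mem_cDual_sub_mem_cHull {f d : 𝔼} (hf : ‖f‖ = 1) (hd : ‖d‖ ≤ 1) :
    ∃ w ∈ cDual (segment ℝ (-d) d), f - w ∈ cHull (segment ℝ (-d) d) := by
  rcases le_or_gt (‖d‖ ^ 2) |⟪f, d⟫| with hfd | hfd
  · rcases le_or_gt 0 ⟪f, d⟫ with hg | hg
    · exact exists_mem_cDual_sub_mem_cHull_of_sq_le_inner hf (abs_of_nonneg hg ▸ hfd)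
    · have h := exists_mem_cDual_sub_mem_cHull_of_sq_le_inner (d := -d) hf
        (by rwa [norm_neg, inner_neg_right, ← abs_of_neg hg])
      rwa [neg_neg, segment_symm] at h
  · have hd₀ : ‖d‖ ^ 2 ≠ 0 := ((abs_nonneg _).trans_lt hfd).ne'
    set a := ⟪f, d⟫ / ‖d‖ ^ 2
    have ha : |a| ≤ 1 := by
      rw [abs_div, abs_of_nonneg (sq_nonneg ‖d‖)]
      exact div_le_one_of_le₀ hfd.le (sq_nonneg _)
    have hde : ⟪d, f - a • d⟫ = 0 := by
      rw [inner_sub_right, real_inner_smul_right, real_inner_self_eq_norm_sq, real_inner_comm,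
        div_mul_cancel₀ _ hd₀, sub_self]
    have h := exists_mem_cDual_sub_mem_cHull_of_inner_eq_zero ha hd hde
      (by rwa [add_sub_cancel])
    rwa [add_sub_cancel] at h

lemma cHull_segment_inter_nonempty_of_zero_mem (m d₁ d₂ : 𝔼)
    (h0 : 0 ∈ cHull (segment ℝ (m - ((2 : ℝ)⁻¹ • d₁ + (2 : ℝ)⁻¹ • d₂))
      (m + ((2 : ℝ)⁻¹ • d₁ + (2 : ℝ)⁻¹ • d₂)))) :
    (cHull (segment ℝ (m - d₁) (m + d₁)) ∩ cHull (segment ℝ (-m - d₂) (-m + d₂))).Nonempty := by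
  rcases (cDual (segment ℝ (m - d₁) (m + d₁))).eq_empty_or_nonempty with h₁ | ⟨y₁, hy₁⟩
  · exact ⟨-m - d₂, by simp [cHull, h₁], subset_cHull _ (left_mem_segment ℝ _ _)⟩
  rcases (cDual (segment ℝ (-m - d₂) (-m + d₂))).eq_empty_or_nonempty with h₂ | ⟨y₂, hy₂⟩
  · exact ⟨m - d₁, subset_cHull _ (left_mem_segment ℝ _ _), by simp [cHull, h₂]⟩
  by_contra hdisj
  rw [not_nonempty_iff_eq_empty, ← disjoint_iff_inter_eq_empty] at hdisj
  obtain ⟨f, hf, hsep⟩ := exists_norm_eq_one_inner_lt_of_disjoint (convex_cDual _)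
    (isCompact_cDual ⟨y₁, hy₁⟩) (convex_cDual _) (isClosed_cDual _) hdisj
    ⟨_, subset_cHull _ (left_mem_segment ℝ _ _)⟩ ⟨_, subset_cHull _ (left_mem_segment ℝ _ _)⟩
  obtain ⟨w₁, hw₁, hk₁⟩ := exists_mem_cDual_sub_mem_cHull hf (norm_le_one_of_mem_cDual_segment hy₁)
  obtain ⟨w₂, hw₂, hk₂⟩ := exists_mem_cDual_sub_mem_cHull hf (norm_le_one_of_mem_cDual_segment hy₂)
  set w := m - ((2 : ℝ)⁻¹ • w₁ + (2 : ℝ)⁻¹ • w₂)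
  have hw : ‖w‖ ≤ 1 := by
    simpa using h0 w (sub_mem_cDual_segment (convex_combination_mem_cDual_segment hw₁ hw₂
      (by norm_num) (by norm_num) (by norm_num)) m)
  have hlt := hsep _ (add_mem_cHull_segment hk₁ m) _ (sub_mem_cHull_segment hk₂ (-m))
  have hgap : ⟪f, -m - (f - w₂)⟫ - ⟪f, m + (f - w₁)⟫ = -2 * ⟪f, w⟫ - 2 := by
    rw [← inner_sub_right, show -m - (f - w₂) - (m + (f - w₁)) = (-2 : ℝ) • w - (2 : ℝ) • f by
      module, inner_sub_right, real_inner_smul_right, real_inner_smul_right,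
      real_inner_self_eq_norm_sq, hf]
    ring
  have hfw : -⟪f, w⟫ ≤ 1 := by
    simpa [hf] using (real_inner_le_norm f (-w)).trans (by simpa [hf] using hw)
  linarith

end

theorem stmt19_general (n : ℕ) (u₀ u₁ z : EuclideanSpace ℝ (Fin n))
    (h0 : (0 : EuclideanSpace ℝ (Fin n)) ∈ cHull (segment ℝ u₀ u₁)) :
    (cHull (segment ℝ (u₁ + z) (u₀ - z)) ∩
      cHull (segment ℝ (-u₁ + z) (-u₀ - z))).Nonempty := by
  have h := cHull_segment_inter_nonempty_of_zero_mem ((2 : ℝ)⁻¹ • (u₀ + u₁))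
    ((2 : ℝ)⁻¹ • (u₁ - u₀) + z) ((2 : ℝ)⁻¹ • (u₁ - u₀) - z) (by convert h0 using 3 <;> module)
  rw [segment_symm ℝ (u₁ + z)]
  convert h using 4 <;> module

/-- If `0 ∈ conv_c([u₀,u₁])`, then the two skewed `1`-lenses `conv_c([u₁+z, u₀-z])` and
`conv_c([-u₁+z, -u₀-z])` intersect. -/
theorem stmt19 (n : ℕ) (hn : 1 ≤ n) (u₀ u₁ z : EuclideanSpace ℝ (Fin n))
    (h0 : (0 : EuclideanSpace ℝ (Fin n)) ∈ cHull (segment ℝ u₀ u₁)) :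
    (cHull (segment ℝ (u₁ + z) (u₀ - z)) ∩
      cHull (segment ℝ (-u₁ + z) (-u₀ - z))).Nonempty :=
  stmt19_general n u₀ u₁ z h0
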